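/- Let X be a real diagonal n×n matrix, let O_X := convexHull{g X gᵀ : g ∈ O(n)}, let Π_X := convexHull{σ·X : σ ∈ S_n}, and let P be the linear map on n×n real matrices that sets all off-diagonal entries to zero. Then for every face F of O_X (a convex extreme subset of O_X) there exists k ∈ O(n) such that P({k Y kᵀ : Y ∈ F}) is a face of Π_X. -/

import Mathlib

/-!
Take a point `Y₀` in the relative interior of the face `F` and an orthogonal `k` diagonalising
the symmetric matrix `Y₀`; conjugating by `k` preserves the orbitope `O_X`, so `F' = k F kᵀ` is a
face of `O_X` whose relative interior contains the diagonal matrix `Λ = k Y₀ kᵀ`. The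
Schur–Horn inclusion `P(O_X) ⊆ Π_X`, together with `Π_X ⊆ O_X` and `P = id` on `Π_X`, then
identifies `P(F')` with the smallest face of `Π_X` containing `Λ`: the set of `y ∈ Π_X` for which
the segment from `y` through `Λ` can be prolonged inside `Π_X`.
-/

open Matrix

/-- The linear operation on `n × n` real matrices that sets all off-diagonal entries to zero
(orthogonal projection onto the subspace of diagonal matrices). -/
def diagPart {n : ℕ} (A : Matrix (Fin n) (Fin n) ℝ) : Matrix (Fin n) (Fin n) ℝ :=
  Matrix.diagonal (fun i => A i i)

open Set

section Faces

variable {𝕜 E F : Type*} [Semiring 𝕜] [PartialOrder 𝕜]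
  [AddCommMonoid E] [Module 𝕜 E] [AddCommMonoid F] [Module 𝕜 F]

theorem LinearMap.map_mem_openSegment (f : E →ₗ[𝕜] F) {x y z : E}
    (h : x ∈ openSegment 𝕜 y z) : f x ∈ openSegment 𝕜 (f y) (f z) := by
  obtain ⟨a, b, ha, hb, hab, rfl⟩ := h
  exact ⟨a, b, ha, hb, hab, by simp only [map_add, map_smul]⟩

theorem IsExtreme.image_linearEquiv (e : E ≃ₗ[𝕜] F) {A B : Set E} (h : IsExtreme 𝕜 A B) :
    IsExtreme 𝕜 (e '' A) (e '' B) := by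
  refine ⟨image_mono h.subset, ?_⟩
  rintro _ ⟨x₁, hx₁, rfl⟩ _ ⟨x₂, hx₂, rfl⟩ _ ⟨x, hx, rfl⟩ hseg
  have hseg' := e.symm.toLinearMap.map_mem_openSegment hseg
  simp only [LinearEquiv.coe_coe, LinearEquiv.symm_apply_apply] at hseg'
  exact mem_image_of_mem e (h.left_mem_of_mem_openSegment hx₁ hx₂ hx hseg')

variable (𝕜) in
/-- The algebraic relative interior (intrinsic core) of `s`. -/
def intrinsicCore (s : Set E) : Set E :=
  {x ∈ s | ∀ y ∈ s, ∃ z ∈ s, x ∈ openSegment 𝕜 y z}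

variable (𝕜) in
/-- For convex `C` and `x ∈ C`, the smallest face of `C` containing `x`. -/
def pointFace (C : Set E) (x : E) : Set E :=
  {y ∈ C | ∃ z ∈ C, x ∈ openSegment 𝕜 y z}

theorem image_intrinsicCore_subset (f : E →ₗ[𝕜] F) (s : Set E) :
    f '' intrinsicCore 𝕜 s ⊆ intrinsicCore 𝕜 (f '' s) := by
  rintro _ ⟨x, ⟨hxs, hx⟩, rfl⟩
  refine ⟨mem_image_of_mem f hxs, ?_⟩
  rintro _ ⟨y, hy, rfl⟩
  obtain ⟨z, hz, hxz⟩ := hx y hy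
  exact ⟨f z, mem_image_of_mem f hz, f.map_mem_openSegment hxz⟩

theorem image_eq_pointFace_of_isExtreme {P : E →ₗ[𝕜] E} {K Q G : Set E} {x : E}
    (hPK : P '' K ⊆ Q) (hQK : Q ⊆ K) (hPQ : ∀ y ∈ Q, P y = y)
    (hG : IsExtreme 𝕜 K G) (hx : x ∈ intrinsicCore 𝕜 G) (hPx : P x = x) :
    P '' G = pointFace 𝕜 Q x := by
  apply Subset.antisymm
  · rintro _ ⟨y, hy, rfl⟩
    obtain ⟨z, hz, hxz⟩ := hx.2 y hy
    refine ⟨hPK (mem_image_of_mem P (hG.subset hy)), P z,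
      hPK (mem_image_of_mem P (hG.subset hz)), ?_⟩
    simpa only [hPx] using P.map_mem_openSegment hxz
  · rintro y ⟨hy, z, hz, hxz⟩
    exact ⟨y, hG.left_mem_of_mem_openSegment (hQK hy) (hQK hz) hx.1 hxz, hPQ y hy⟩

end Faces

section Pasch

variable {𝕜 E : Type*} [Field 𝕜] [LinearOrder 𝕜] [IsStrictOrderedRing 𝕜]
  [AddCommGroup E] [Module 𝕜 E]

theorem openSegment_pasch {a b x z y : E} (hx : x ∈ openSegment 𝕜 a b)
    (hy : y ∈ openSegment 𝕜 x z) : ∃ w ∈ openSegment 𝕜 b z, y ∈ openSegment 𝕜 a w := by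
  obtain ⟨p, q, hp, hq, hpq, rfl⟩ := hx
  obtain ⟨r, s, hr, hs, hrs, rfl⟩ := hy
  have hden : 0 < r * q + s := by positivity
  refine ⟨(r * q / (r * q + s)) • b + (s / (r * q + s)) • z,
    ⟨_, _, by positivity, by positivity, by field_simp, rfl⟩,
    ⟨r * p, r * q + s, by positivity, hden, by linear_combination r * hpq + hrs, ?_⟩⟩
  rw [smul_add, smul_smul, smul_smul, mul_div_cancel₀ _ hden.ne', mul_div_cancel₀ _ hden.ne']
  module

theorem isExtreme_pointFace {C : Set E} (hC : Convex 𝕜 C) (x : E) :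
    IsExtreme 𝕜 C (pointFace 𝕜 C x) := by
  refine ⟨fun y hy => hy.1, ?_⟩
  rintro y₁ hy₁ y₂ hy₂ y ⟨-, z, hz, hxz⟩ hy
  obtain ⟨w, hw, hxw⟩ := openSegment_pasch hy hxz
  exact ⟨hy₁, w, hC.openSegment_subset hy₂ hz hw, hxw⟩

end Pasch

open AffineMap in
theorem intrinsicInterior_subset_intrinsicCore {E : Type*} [AddCommGroup E] [Module ℝ E]
    [TopologicalSpace E] [IsTopologicalAddGroup E] [ContinuousSMul ℝ E] (s : Set E) :
    intrinsicInterior ℝ s ⊆ intrinsicCore ℝ s := by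
  rintro _ ⟨x, hx, rfl⟩
  refine ⟨interior_subset (s := Subtype.val ⁻¹' s) hx, fun y hy => ?_⟩
  have hmem : ∀ t : ℝ, lineMap y (x : E) t ∈ affineSpan ℝ s := fun t =>
    AffineMap.lineMap_mem t (subset_affineSpan ℝ s hy) x.2
  have hcont : Continuous fun t : ℝ => (⟨lineMap y (x : E) t, hmem t⟩ : affineSpan ℝ s) :=
    lineMap_continuous.subtype_mk hmem
  obtain ⟨t, ht1, ht⟩ := (hcont.tendsto' 1 x (Subtype.ext (lineMap_apply_one _ _))).eventually_mem
    (isOpen_interior.mem_nhds hx) |>.exists_gt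
  refine ⟨_, interior_subset (s := Subtype.val ⁻¹' s) ht, ?_⟩
  nth_rw 1 [← lineMap_apply_zero (k := ℝ) y (x : E), ← image_openSegment]
  exact ⟨1, Ioo_subset_openSegment ⟨zero_lt_one, ht1⟩, lineMap_apply_one _ _⟩

open Unitary

namespace Matrix

variable {ι : Type*} [Fintype ι] [DecidableEq ι]

def orthogonalOrbit (d : ι → ℝ) : Set (Matrix ι ι ℝ) :=
  {m | ∃ g ∈ orthogonalGroup ι ℝ, m = g * diagonal d * gᵀ}

def permOrbit (d : ι → ℝ) : Set (Matrix ι ι ℝ) :=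
  {m | ∃ σ : Equiv.Perm ι, m = diagonal (fun i => d (σ⁻¹ i))}

theorem conjStarAlgAut_orthogonalGroup_apply (k : orthogonalGroup ι ℝ) (Y : Matrix ι ι ℝ) :
    conjStarAlgAut ℝ _ k Y = k * Y * (k : Matrix ι ι ℝ)ᵀ := by
  rw [conjStarAlgAut_apply, star_eq_conjTranspose, conjTranspose_eq_transpose_of_trivial]

theorem conjStarAlgAut_image_orthogonalOrbit_subset (k : orthogonalGroup ι ℝ) (d : ι → ℝ) :
    conjStarAlgAut ℝ _ k '' orthogonalOrbit d ⊆ orthogonalOrbit d := by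
  rintro _ ⟨_, ⟨g, hg, rfl⟩, rfl⟩
  refine ⟨k * g, mul_mem k.2 hg, ?_⟩
  rw [conjStarAlgAut_orthogonalGroup_apply, transpose_mul]
  noncomm_ring

theorem conjStarAlgAut_image_orthogonalOrbit (k : orthogonalGroup ι ℝ) (d : ι → ℝ) :
    conjStarAlgAut ℝ _ k '' orthogonalOrbit d = orthogonalOrbit d := by
  refine (conjStarAlgAut_image_orthogonalOrbit_subset k d).antisymm fun m hm => ?_
  refine ⟨(conjStarAlgAut ℝ _ k).symm m, ?_, StarAlgEquiv.apply_symm_apply _ _⟩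
  rw [conjStarAlgAut_symm]
  exact conjStarAlgAut_image_orthogonalOrbit_subset (star k) d (mem_image_of_mem _ hm)

theorem conjStarAlgAut_image_convexHull_orthogonalOrbit (k : orthogonalGroup ι ℝ) (d : ι → ℝ) :
    conjStarAlgAut ℝ _ k '' convexHull ℝ (orthogonalOrbit d) =
      convexHull ℝ (orthogonalOrbit d) := by
  exact ((conjStarAlgAut ℝ (Matrix ι ι ℝ) k).toAlgEquiv.toLinearMap.image_convexHull _).trans
    (congrArg _ (conjStarAlgAut_image_orthogonalOrbit k d))

theorem permMatrix_mem_orthogonalGroup (σ : Equiv.Perm ι) :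
    σ.permMatrix ℝ ∈ orthogonalGroup ι ℝ := by
  rw [mem_orthogonalGroup_iff, transpose_permMatrix, ← permMatrix_mul, inv_mul_cancel,
    permMatrix_one]

theorem permMatrix_mul_diagonal_mul_transpose (σ : Equiv.Perm ι) (d : ι → ℝ) :
    σ.permMatrix ℝ * diagonal d * (σ.permMatrix ℝ)ᵀ = diagonal (d ∘ σ) := by
  rw [transpose_permMatrix, PEquiv.toMatrix_toPEquiv_mul, Equiv.Perm.permMatrix,
    PEquiv.mul_toMatrix_toPEquiv, submatrix_submatrix]
  exact submatrix_diagonal_equiv d σ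

theorem permOrbit_subset_orthogonalOrbit (d : ι → ℝ) : permOrbit d ⊆ orthogonalOrbit d := by
  rintro _ ⟨σ, rfl⟩
  exact ⟨_, permMatrix_mem_orthogonalGroup σ⁻¹,
    (permMatrix_mul_diagonal_mul_transpose σ⁻¹ d).symm⟩

theorem isHermitian_of_mem_convexHull_orthogonalOrbit {d : ι → ℝ} {Y : Matrix ι ι ℝ}
    (hY : Y ∈ convexHull ℝ (orthogonalOrbit d)) : Y.IsHermitian := by
  rw [isHermitian_iff_isSelfAdjoint]
  refine convexHull_min ?_ (selfAdjoint.submodule ℝ (Matrix ι ι ℝ)).convex hY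
  rintro _ ⟨g, -, rfl⟩
  change IsSelfAdjoint _
  simp [IsSelfAdjoint, star_eq_conjTranspose, conjTranspose_eq_transpose_of_trivial,
    transpose_mul, mul_assoc]

theorem IsHermitian.exists_conjStarAlgAut_eq_diagonal {A : Matrix ι ι ℝ} (hA : A.IsHermitian) :
    ∃ (k : orthogonalGroup ι ℝ) (e : ι → ℝ), conjStarAlgAut ℝ _ k A = diagonal e :=
  ⟨star hA.eigenvectorUnitary, _, by
    rw [← conjStarAlgAut_symm, StarAlgEquiv.symm_apply_eq]; exact hA.spectral_theorem⟩

theorem hadamard_self_mem_doublyStochastic {g : Matrix ι ι ℝ} (hg : g ∈ orthogonalGroup ι ℝ) :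
    g ⊙ g ∈ doublyStochastic ℝ ι := by
  have hrow := congr_fun₂ ((mem_orthogonalGroup_iff ι ℝ).1 hg)
  have hcol := congr_fun₂ ((mem_orthogonalGroup_iff' ι ℝ).1 hg)
  refine mem_doublyStochastic_iff_sum.2 ⟨fun i j => mul_self_nonneg _, fun i => ?_, fun j => ?_⟩
  · simpa [mul_apply] using hrow i i
  · simpa [mul_apply] using hcol j j

theorem diagonal_mulVec_mem_convexHull_permOrbit {M : Matrix ι ι ℝ}
    (hM : M ∈ doublyStochastic ℝ ι) (d : ι → ℝ) :
    diagonal (M *ᵥ d) ∈ convexHull ℝ (permOrbit d) := by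
  let L : Matrix ι ι ℝ →ₗ[ℝ] Matrix ι ι ℝ := diagonalLinearMap ι ℝ ℝ ∘ₗ (mulVecBilin ℝ ℝ).flip d
  rw [← SetLike.mem_coe, doublyStochastic_eq_convexHull_permMatrix] at hM
  have hLM : L M ∈ L '' convexHull ℝ _ := mem_image_of_mem L hM
  rw [L.image_convexHull] at hLM
  refine convexHull_mono ?_ hLM
  rintro _ ⟨_, ⟨σ, rfl⟩, rfl⟩
  exact ⟨σ⁻¹, by simp [L, permMatrix_mulVec]⟩

end Matrix

section DiagPart

variable {n : ℕ}

def diagPartLinearMap : Matrix (Fin n) (Fin n) ℝ →ₗ[ℝ] Matrix (Fin n) (Fin n) ℝ :=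
  diagonalLinearMap (Fin n) ℝ ℝ ∘ₗ diagLinearMap (Fin n) ℝ ℝ

theorem coe_diagPartLinearMap : ⇑(diagPartLinearMap (n := n)) = diagPart := rfl

theorem diagPart_diagonal (v : Fin n → ℝ) : diagPart (diagonal v) = diagonal v := by
  simp [diagPart]

theorem diagPart_mul_diagonal_mul_transpose (g : Matrix (Fin n) (Fin n) ℝ) (d : Fin n → ℝ) :
    diagPart (g * diagonal d * gᵀ) = diagonal ((g ⊙ g) *ᵥ d) := by
  simp only [diagPart]
  congr 1
  ext i
  simp [mul_apply, diagonal_apply, mulVec, dotProduct, mul_comm, mul_left_comm]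

theorem diagPart_image_convexHull_orthogonalOrbit_subset (d : Fin n → ℝ) :
    diagPart '' convexHull ℝ (orthogonalOrbit d) ⊆ convexHull ℝ (permOrbit d) := by
  rw [← coe_diagPartLinearMap, LinearMap.image_convexHull]
  refine convexHull_min ?_ (convex_convexHull ℝ _)
  rintro _ ⟨_, ⟨g, hg, rfl⟩, rfl⟩
  rw [coe_diagPartLinearMap, diagPart_mul_diagonal_mul_transpose]
  exact diagonal_mulVec_mem_convexHull_permOrbit (hadamard_self_mem_doublyStochastic hg) d

theorem diagPart_eq_self_of_mem_convexHull_permOrbit {d : Fin n → ℝ} {Y : Matrix (Fin n) (Fin n) ℝ}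
    (hY : Y ∈ convexHull ℝ (permOrbit d)) : diagPart Y = Y := by
  obtain ⟨v, rfl⟩ : Y ∈ LinearMap.range (diagonalLinearMap (Fin n) ℝ ℝ) := by
    refine convexHull_min ?_ (Submodule.convex _) hY
    rintro _ ⟨σ, rfl⟩
    exact ⟨_, rfl⟩
  exact diagPart_diagonal v

end DiagPart

attribute [local instance] Matrix.normedAddCommGroup Matrix.normedSpace

/-- for `X = diagonal d`, `O_X = convexHull {g X gᵀ : g ∈ O(n)}` and
`Π_X = convexHull {σ·X : σ ∈ S_n}`, every face `F` of `O_X` admits `k ∈ O(n)` such that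
`P({k Y kᵀ : Y ∈ F})` is a face of `Π_X`, where `P` sets off-diagonal entries to zero. -/
theorem exists_conj_projection_face
    {n : ℕ} (d : Fin n → ℝ)
    (F : Set (Matrix (Fin n) (Fin n) ℝ)) (hFconv : Convex ℝ F)
    (hF : IsExtreme ℝ (convexHull ℝ {m : Matrix (Fin n) (Fin n) ℝ |
        ∃ g ∈ Matrix.orthogonalGroup (Fin n) ℝ, m = g * Matrix.diagonal d * gᵀ}) F) :
    ∃ k ∈ Matrix.orthogonalGroup (Fin n) ℝ,
      Convex ℝ (diagPart '' ((fun Y => k * Y * kᵀ) '' F)) ∧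
      IsExtreme ℝ (convexHull ℝ {m : Matrix (Fin n) (Fin n) ℝ |
          ∃ σ : Equiv.Perm (Fin n), m = Matrix.diagonal (fun i => d (σ⁻¹ i))})
        (diagPart '' ((fun Y => k * Y * kᵀ) '' F)) := by
  rcases F.eq_empty_or_nonempty with rfl | hne
  · exact ⟨1, one_mem _, by simpa using convex_empty,
      by simpa using ⟨empty_subset _, fun _ _ _ _ _ h => h.elim⟩⟩
  obtain ⟨Y₀, hY₀⟩ := (hne.intrinsicInterior hFconv).mono (intrinsicInterior_subset_intrinsicCore F)
  obtain ⟨k, e, hk⟩ := (isHermitian_of_mem_convexHull_orthogonalOrbit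
    (hF.subset hY₀.1)).exists_conjStarAlgAut_eq_diagonal
  let φ := (conjStarAlgAut ℝ (Matrix (Fin n) (Fin n) ℝ) k).toAlgEquiv.toLinearEquiv
  have hφ : (fun Y => k * Y * (k : Matrix (Fin n) (Fin n) ℝ)ᵀ) = φ :=
    funext fun Y => (conjStarAlgAut_orthogonalGroup_apply k Y).symm
  have hface : IsExtreme ℝ (convexHull ℝ (orthogonalOrbit d)) (φ '' F) := by
    change IsExtreme ℝ (convexHull ℝ (orthogonalOrbit d)) F at hF
    simpa [φ, conjStarAlgAut_image_convexHull_orthogonalOrbit] using hF.image_linearEquiv φ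
  refine ⟨k, k.2, ?_⟩
  rw [hφ, ← coe_diagPartLinearMap]
  refine ⟨(hFconv.linear_image φ.toLinearMap).linear_image _, ?_⟩
  rw [image_eq_pointFace_of_isExtreme (diagPart_image_convexHull_orthogonalOrbit_subset d)
    (convexHull_mono (permOrbit_subset_orthogonalOrbit d))
    (fun _ => diagPart_eq_self_of_mem_convexHull_permOrbit) hface
    (image_intrinsicCore_subset φ.toLinearMap F ⟨Y₀, hY₀, rfl⟩)]
  · exact isExtreme_pointFace (convex_convexHull ℝ _) _
  · simp [φ, hk, coe_diagPartLinearMap, diagPart_diagonal]
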